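/- arXiv:1002.0164 — 2 statements merged into one kernel-verified Lean document; each statement's English description precedes it below -/
import Mathlib

section
/- Let X, X_m (m ∈ ℕ) be Banach spaces with operators P_m : X → X_m, J_m : X_m → X such that P_m J_m = I_m, ‖J_m‖ ≤ K, ‖P_m‖ ≤ K, and J_m P_m x → x for every x ∈ X. Define on the spaces C₀(ℝ;X) and C₀(ℝ;X_m) the operators (𝒫_m f)(t) := P_m f(t) and (𝒥_m g)(t) := J_m g(t). Then 𝒫_m 𝒥_m = I on C₀(ℝ;X_m), ‖𝒥_m‖ ≤ K, ‖𝒫_m‖ ≤ K, and for every f ∈ C₀(ℝ;X), ‖𝒥_m 𝒫_m f - f‖_∞ → 0 as m → ∞, i.e. the pointwise convergence J_m P_m f(s) → f(s) is in fact uniform in s ∈ ℝ. -/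
open Filter Topology Set ZeroAtInfty

/-- Composition of a `C₀` function with a continuous linear map, as a continuous linear map. -/
noncomputable def ZeroAtInftyCompCLM {X Y : Type*} [NormedAddCommGroup X] [NormedSpace ℝ X]
    [NormedAddCommGroup Y] [NormedSpace ℝ Y] (T : X →L[ℝ] Y) :
    C₀(ℝ, X) →L[ℝ] C₀(ℝ, Y) :=
  LinearMap.mkContinuous
    { toFun := fun f =>
        { toFun := fun t => T (f t)
          continuous_toFun := T.continuous.comp f.continuous
          zero_at_infty' := by
            have h0 : T 0 = 0 := map_zero T
            have := (T.continuous.tendsto 0).comp f.zero_at_infty'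
            rwa [h0] at this }
      map_add' := fun f g => by ext t; simp
      map_smul' := fun c f => by ext t; simp }
    ‖T‖ (by
      intro f
      rw [← ZeroAtInftyContinuousMap.norm_toBCF_eq_norm,
        ← ZeroAtInftyContinuousMap.norm_toBCF_eq_norm]
      refine (BoundedContinuousFunction.norm_le (by positivity)).2 fun t => ?_
      calc ‖T (f t)‖ ≤ ‖T‖ * ‖f t‖ := T.le_opNorm _
        _ ≤ ‖T‖ * ‖f.toBCF‖ := by
            gcongr
            exact f.toBCF.norm_coe_le_norm t)

@[simp] theorem ZeroAtInftyCompCLM_apply {X Y : Type*} [NormedAddCommGroup X] [NormedSpace ℝ X]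
    [NormedAddCommGroup Y] [NormedSpace ℝ Y] (T : X →L[ℝ] Y) (f : C₀(ℝ, X)) (t : ℝ) :
    ZeroAtInftyCompCLM T f t = T (f t) := rfl

theorem ZeroAtInftyCompCLM_norm_le {X Y : Type*} [NormedAddCommGroup X] [NormedSpace ℝ X]
    [NormedAddCommGroup Y] [NormedSpace ℝ Y] (T : X →L[ℝ] Y) :
    ‖ZeroAtInftyCompCLM T‖ ≤ ‖T‖ :=
  LinearMap.mkContinuous_norm_le _ (norm_nonneg T) _

/-- **Spatial approximation lemma.** The projections `P_m` and interpolations `J_m` induce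
operators `Pm_m`, `Jm_m` on the spaces `C₀(ℝ, X)`, `C₀(ℝ, X_m)` with the same properties;
in particular `Jm_m Pm_m f → f` uniformly in `s ∈ ℝ`. -/
theorem spatial_approximation_lemma
    {X : Type*} [NormedAddCommGroup X] [NormedSpace ℝ X]
    (Xm : ℕ → Type*) [∀ m, NormedAddCommGroup (Xm m)] [∀ m, NormedSpace ℝ (Xm m)]
    (P : ∀ m, X →L[ℝ] Xm m) (J : ∀ m, Xm m →L[ℝ] X)
    (K : ℝ) (hK : 1 ≤ K)
    (hPJ : ∀ m, (P m).comp (J m) = ContinuousLinearMap.id ℝ (Xm m))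
    (hJ : ∀ m, ‖J m‖ ≤ K) (hP : ∀ m, ‖P m‖ ≤ K)
    (hconv : ∀ x : X, Tendsto (fun m => J m (P m x)) atTop (𝓝 x)) :
    ∃ (Pm : ∀ m, C₀(ℝ, X) →L[ℝ] C₀(ℝ, Xm m))
      (Jm : ∀ m, C₀(ℝ, Xm m) →L[ℝ] C₀(ℝ, X)),
      (∀ (m : ℕ) (f : C₀(ℝ, X)) (t : ℝ), Pm m f t = P m (f t)) ∧
      (∀ (m : ℕ) (g : C₀(ℝ, Xm m)) (t : ℝ), Jm m g t = J m (g t)) ∧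
      (∀ m, (Pm m).comp (Jm m) = ContinuousLinearMap.id ℝ C₀(ℝ, Xm m)) ∧
      (∀ m, ‖Jm m‖ ≤ K) ∧ (∀ m, ‖Pm m‖ ≤ K) ∧
      (∀ f : C₀(ℝ, X), Tendsto (fun m => ‖Jm m (Pm m f) - f‖) atTop (𝓝 0)) := by
  refine ⟨fun m => ZeroAtInftyCompCLM (P m), fun m => ZeroAtInftyCompCLM (J m),
    fun m f t => rfl, fun m g t => rfl, ?_, ?_, ?_, ?_⟩
  · -- Pm ∘ Jm = id
    intro m
    ext g t
    have := DFunLike.congr_fun (hPJ m) (g t)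
    simpa using this
  · exact fun m => (ZeroAtInftyCompCLM_norm_le (J m)).trans (hJ m)
  · exact fun m => (ZeroAtInftyCompCLM_norm_le (P m)).trans (hP m)
  · -- uniform convergence
    intro f
    rw [Metric.tendsto_atTop]
    intro ε hε
    have hKpos : (0:ℝ) < K := lt_of_lt_of_le one_pos hK
    set δ : ℝ := ε / (2 * (K ^ 2 + 2)) with hδdef
    have hδpos : 0 < δ := by positivity
    -- Step 1: a compact set outside which f is small
    obtain ⟨C, hC, hCsmall⟩ :
        ∃ C : Set ℝ, IsCompact C ∧ ∀ t ∉ C, ‖f t‖ < δ := by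
      have := f.zero_at_infty'
      have hmem : {x : X | ‖x‖ < δ} ∈ 𝓝 (0 : X) := by
        have : Metric.ball (0 : X) δ ∈ 𝓝 (0 : X) := Metric.ball_mem_nhds _ hδpos
        simpa [Metric.ball, dist_zero_right] using this
      have h2 := this hmem
      rw [Filter.mem_map, Filter.mem_cocompact] at h2
      obtain ⟨C, hC, hsub⟩ := h2
      exact ⟨C, hC, fun t ht => hsub ht⟩
    -- Step 2: a finite δ-net of f '' C together with 0
    have himg : IsCompact (f '' C) := hC.image f.continuous
    obtain ⟨s, hsfin, hscov⟩ :=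
      (Metric.totallyBounded_iff.1 himg.totallyBounded) δ hδpos
    set F : Set X := insert 0 s with hFdef
    have hFfin : F.Finite := hsfin.insert 0
    -- Step 3: eventually J m (P m x) is δ-close to x for all x ∈ F
    have hev : ∀ᶠ m in atTop, ∀ x ∈ F, ‖J m (P m x) - x‖ < δ := by
      rw [Filter.eventually_all_finite hFfin]
      intro x _
      have := hconv x
      rw [Metric.tendsto_atTop] at this
      obtain ⟨N, hN⟩ := this δ hδpos
      refine Filter.eventually_atTop.2 ⟨N, fun m hm => ?_⟩
      simpa [dist_eq_norm] using hN m hm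
    obtain ⟨N, hN⟩ := Filter.eventually_atTop.1 hev
    refine ⟨N, fun m hm => ?_⟩
    -- Step 4: pointwise estimate
    have hnet : ∀ t : ℝ, ∃ x ∈ F, ‖f t - x‖ < δ := by
      intro t
      by_cases ht : t ∈ C
      · have : f t ∈ f '' C := mem_image_of_mem f ht
        have := hscov this
        simp only [mem_iUnion, Metric.mem_ball] at this
        obtain ⟨x, hx, hdx⟩ := this
        exact ⟨x, Or.inr hx, by simpa [dist_eq_norm] using hdx⟩
      · exact ⟨0, Or.inl rfl, by simpa using hCsmall t ht⟩
    have hpt : ∀ t : ℝ, ‖J m (P m (f t)) - f t‖ ≤ (K ^ 2 + 2) * δ := by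
      intro t
      obtain ⟨x, hxF, hx⟩ := hnet t
      have h1 : ‖J m (P m (f t - x))‖ ≤ K ^ 2 * δ := by
        calc ‖J m (P m (f t - x))‖ ≤ ‖J m‖ * ‖P m (f t - x)‖ := (J m).le_opNorm _
          _ ≤ ‖J m‖ * (‖P m‖ * ‖f t - x‖) := by
              gcongr
              exact (P m).le_opNorm _
          _ ≤ K * (K * δ) := by
              have h0J : (0:ℝ) ≤ ‖J m‖ := norm_nonneg _
              have h0P : (0:ℝ) ≤ ‖P m‖ := norm_nonneg _
              gcongr <;> first | exact hJ m | exact hP m | exact hx.le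
          _ = K ^ 2 * δ := by ring
      have h2 : ‖J m (P m x) - x‖ < δ := hN m hm x hxF
      calc ‖J m (P m (f t)) - f t‖
          = ‖J m (P m (f t - x)) + ((J m (P m x) - x) + (x - f t))‖ := by
            congr 1
            simp only [map_sub]
            abel
        _ ≤ ‖J m (P m (f t - x))‖ + (‖J m (P m x) - x‖ + ‖x - f t‖) :=
            norm_add_le _ _ |>.trans (by gcongr; exact norm_add_le _ _)
        _ ≤ K ^ 2 * δ + (δ + δ) := by
            have hx' : ‖x - f t‖ < δ := by rwa [norm_sub_rev] at hx
            gcongr <;> first | exact h2.le | exact hx'.le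
        _ = (K ^ 2 + 2) * δ := by ring
    -- Step 5: conclude the norm bound
    have hnorm : ‖ZeroAtInftyCompCLM (J m) (ZeroAtInftyCompCLM (P m) f) - f‖ ≤ (K ^ 2 + 2) * δ := by
      rw [← ZeroAtInftyContinuousMap.norm_toBCF_eq_norm]
      refine (BoundedContinuousFunction.norm_le (by positivity)).2 fun t => ?_
      have : (ZeroAtInftyCompCLM (J m) (ZeroAtInftyCompCLM (P m) f) - f) t
          = J m (P m (f t)) - f t := rfl
      simpa [this] using hpt t
    have hlt : (K ^ 2 + 2) * δ < ε := by
      rw [hδdef]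
      rw [mul_div_assoc']
      rw [div_lt_iff₀ (by positivity)]
      nlinarith [sq_nonneg K]
    rw [Real.dist_eq, sub_zero, abs_of_nonneg (norm_nonneg _)]
    exact lt_of_le_of_lt hnorm hlt
end

section
/- Let e^{tA} be a bounded C₀-semigroup on a Banach space X with Favard space F_α = {x ∈ X : sup_{t>0} ‖(e^{tA}x - x)/t^α‖ < ∞} for 0 < α < 1, and let T be the semigroup on BUC(ℝ;X) defined by (T(t)f)(s) := e^{tA} f(s-t). If f ∈ BUC(ℝ;X) takes values in F_α with sup_{s} ‖f(s)‖_{F_α} < ∞ and f is α-Hölder continuous, then f belongs to the Favard space of T of order α, with ‖f‖_{Favard,α} ≤ c( sup_s ‖f(s)‖_{F_α} + ‖f‖_{BUC^α} ) for some constant c. -/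
open Filter Topology Set

/-- **Favard space inclusion (Proposition 7.5, first direction).**
If `f : ℝ → X` is bounded uniformly continuous, takes values in the Favard space `F_α`
of the bounded semigroup `e^{tA}` with uniformly bounded Favard norms, and is
`α`-Hölder continuous, then `f` lies in the Favard space of order `α` of the semigroup
`(T(t)f)(s) = e^{tA} f(s-t)` on `BUC(ℝ;X)`, with the corresponding norm estimate. -/
theorem favard_inclusion_of_holder
    {X : Type*} [NormedAddCommGroup X] [NormedSpace ℝ X] [CompleteSpace X]
    (T : ℝ → X →L[ℝ] X) (M : ℝ) (hM : 1 ≤ M)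
    (hT0 : T 0 = 1)
    (hTsg : ∀ t ≥ (0:ℝ), ∀ u ≥ (0:ℝ), T (t + u) = (T t).comp (T u))
    (hTcont : ∀ x : X, ContinuousOn (fun t => T t x) (Ici (0:ℝ)))
    (hTbd : ∀ t ≥ (0:ℝ), ‖T t‖ ≤ M)
    (α : ℝ) (hα : 0 < α) (hα1 : α < 1) :
    ∃ c : ℝ, 0 < c ∧
      ∀ (f : ℝ → X) (KF KH : ℝ),
        UniformContinuous f →
        (∀ s : ℝ, ‖f s‖ ≤ KF) →
        (∀ s : ℝ, ∀ t > (0:ℝ), ‖T t (f s) - f s‖ ≤ KF * t ^ α) →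
        (∀ s s' : ℝ, ‖f s - f s'‖ ≤ KH * |s - s'| ^ α) →
        ∀ t > (0:ℝ), ∀ s : ℝ,
          ‖T t (f (s - t)) - f s‖ ≤ c * (KF + KH) * t ^ α := by
  refine ⟨M, lt_of_lt_of_le one_pos hM, ?_⟩
  intro f KF KH hf hbd hfav hhol t ht s
  have hKF : 0 ≤ KF := le_trans (norm_nonneg _) (hbd 0)
  have hKH : 0 ≤ KH := by
    have := hhol 0 1
    simp at this
    exact le_trans (norm_nonneg _) this
  have htα : 0 ≤ t ^ α := Real.rpow_nonneg ht.le α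
  have key : T t (f (s - t)) - f s = T t (f (s - t) - f s) + (T t (f s) - f s) := by
    rw [map_sub]; abel
  rw [key]
  calc ‖T t (f (s - t) - f s) + (T t (f s) - f s)‖
      ≤ ‖T t (f (s - t) - f s)‖ + ‖T t (f s) - f s‖ := norm_add_le _ _
    _ ≤ M * (KH * t ^ α) + KF * t ^ α := by
        refine add_le_add ?_ (hfav s t ht)
        calc ‖T t (f (s - t) - f s)‖ ≤ ‖T t‖ * ‖f (s - t) - f s‖ :=
              (T t).le_opNorm _
          _ ≤ M * (KH * t ^ α) := by
              have h1 : ‖f (s - t) - f s‖ ≤ KH * t ^ α := by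
                have := hhol (s - t) s
                simpa [abs_of_pos ht] using this
              exact mul_le_mul (hTbd t ht.le) h1 (norm_nonneg _)
                (le_trans zero_le_one hM)
    _ ≤ M * (KF + KH) * t ^ α := by
        have hMKF : KF * t ^ α ≤ M * KF * t ^ α := by
          have : KF ≤ M * KF := le_mul_of_one_le_left hKF hM
          exact mul_le_mul_of_nonneg_right this htα
        nlinarith [mul_nonneg hKF htα, mul_nonneg hKH htα]
end
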